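/- arXiv:1401.0711 — 2 statements merged into one kernel-verified Lean document; each statement's English description precedes it below -/
import Mathlib

section
/- Let μ be a probability measure on (Σ^ω, B) with full support on cylinders, i.e. Pr(x) = μ(xΣ^ω) > 0 for every x ∈ Σ*. If the probabilistic Nerode relation ∼ has finitely many equivalence classes, then μ is generated by a PFSA: there exist a PFSA G = (Q, δ, π̃) over Σ whose state set Q is in bijection with the set of Nerode classes, and a state q_0 ∈ Q (the class of the empty word), such that μ(xΣ^ω) = π̃(q_0, x) for every x ∈ Σ*. -/
open MeasureTheory Filter

/-- Cylinder set `xΣ^ω` of a finite word `x`: infinite sequences beginning with `x`. -/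
def Cylinder {A : Type*} (x : List A) : Set (ℕ → A) :=
  {ω | ∀ i : Fin x.length, ω i = x.get i}

/-- The σ-algebra `B` on `Σ^ω` generated by the cylinder sets. -/
def CylSigma (A : Type*) : MeasurableSpace (ℕ → A) :=
  MeasurableSpace.generateFrom (Set.range (Cylinder (A := A)))

/-- A probabilistic finite-state automaton over a finite alphabet `S`. -/
structure PFSA (Q S : Type*) [Fintype S] where
  δ : Q → S → Q
  π : Q → S → ℝ
  π_nonneg : ∀ q σ, 0 ≤ π q σ
  π_sum : ∀ q, ∑ σ, π q σ = 1

namespace PFSA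

variable {Q S : Type*} [Fintype S]

/-- Extension of the transition map to finite words. -/
def δs (G : PFSA Q S) : Q → List S → Q
  | q, [] => q
  | q, σ :: x => G.δs (G.δ q σ) x

/-- Extension of the symbol-generation probabilities to finite words. -/
def πs (G : PFSA Q S) : Q → List S → ℝ
  | _, [] => 1
  | q, σ :: x => G.π q σ * G.πs (G.δ q σ) x

/-- `G` is strongly connected. -/
def StronglyConnected (G : PFSA Q S) : Prop :=
  ∀ q q' : Q, ∃ x : List S, G.δs q x = q' ∧ 0 < G.πs q x

/-- `G` has distinguishable states. -/
def Distinguishable (G : PFSA Q S) : Prop :=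
  ∀ q q' : Q, q ≠ q' → ∃ x : List S, G.πs q x ≠ G.πs q' x

variable [Fintype Q] [DecidableEq Q]

/-- The transition matrix `M` of the Markov chain induced by `G`. -/
def M (G : PFSA Q S) : Matrix Q Q ℝ :=
  fun q q' => ∑ σ, if G.δ q σ = q' then G.π q σ else 0

/-- `p` is a stationary distribution of `G`: a probability vector with `p M = p`. -/
def IsStationary (G : PFSA Q S) (p : Q → ℝ) : Prop :=
  (∀ q, 0 ≤ p q) ∧ (∑ q, p q = 1) ∧ ∀ q', ∑ q, p q * G.M q q' = p q'

/-- Symbol-specific transformation matrix `Γ_σ`. -/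
def Γ (G : PFSA Q S) (σ : S) : Matrix Q Q ℝ :=
  fun q q' => if G.δ q σ = q' then G.π q σ else 0

/-- Product of transformation matrices along a word: `Γ_{σ₁}⋯Γ_{σ_m}`. -/
def Γs (G : PFSA Q S) (x : List S) : Matrix Q Q ℝ := (x.map G.Γ).prod

/-- The (unnormalized) row vector `p Γ_{σ₁}⋯Γ_{σ_m}`. -/
def wvec (G : PFSA Q S) (p : Q → ℝ) (x : List S) : Q → ℝ :=
  Matrix.vecMul p (G.Γs x)

/-- `Pr(x) = ‖p Γ_{σ₁}⋯Γ_{σ_m}‖₁` (for a nonnegative vector `p`). -/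
def PrW (G : PFSA Q S) (p : Q → ℝ) (x : List S) : ℝ :=
  ∑ q, G.wvec p x q

/-- `℘_x`: the ℓ1-normalization of `p Γ_{σ₁}⋯Γ_{σ_m}`. -/
noncomputable def wdist (G : PFSA Q S) (p : Q → ℝ) (x : List S) : Q → ℝ :=
  fun q => G.wvec p x q / G.PrW p x

end PFSA

/-- The point-mass probability vector `e_q` at `q`. -/
def eVec {Q : Type*} [DecidableEq Q] (q : Q) : Q → ℝ := fun q' => if q' = q then 1 else 0

/-- The ℓ∞ norm of a finitely indexed vector. -/
noncomputable def linf {ι : Type*} [Fintype ι] (v : ι → ℝ) : ℝ := ⨆ i, |v i|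

/-- `x` is an `ε`-synchronizing word for `G` with stationary distribution `p`. -/
noncomputable def EpsSync {Q S : Type*} [Fintype S] [Fintype Q] [DecidableEq Q]
    (G : PFSA Q S) (p : Q → ℝ) (ε : ℝ) (x : List S) : Prop :=
  0 < G.PrW p x ∧ ∃ q : Q, linf (fun q' => G.wdist p x q' - eVec q q') ≤ ε

/-- `p` is a probability vector. -/
def IsProbVec {ι : Type*} [Fintype ι] (p : ι → ℝ) : Prop :=
  (∀ i, 0 ≤ p i) ∧ ∑ i, p i = 1

/-- Entropy (base 2) of a finitely supported vector (`0 log 0 = 0`). -/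
noncomputable def entropy2 {ι : Type*} [Fintype ι] (p : ι → ℝ) : ℝ :=
  -∑ i, p i * Real.logb 2 (p i)

/-- The generalized binary entropy function `B(ε,k)` (for `ε ∈ (0,1/2]`). -/
noncomputable def Bdev (ε : ℝ) (k : ℕ) : ℝ :=
  ε * Real.logb 2 (((k : ℝ) - 1) / ε) + (1 - ε) * Real.logb 2 (1 / (1 - ε))

/-- Number of (possibly overlapping) occurrences of `x` as a contiguous substring of `s`. -/
def countOcc {A : Type*} [DecidableEq A] (s x : List A) : ℕ :=
  ((List.range s.length).filter fun i => decide ((s.drop i).take x.length = x)).length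

/-- Total count `∑_{σ∈Σ} #^s(xσ)`. -/
def totCount {A : Type*} [Fintype A] [DecidableEq A] (s x : List A) : ℕ :=
  ∑ σ : A, countOcc s (x ++ [σ])

/-- The empirical symbolic derivative `φ^s(x)`. -/
noncomputable def phi {A : Type*} [Fintype A] [DecidableEq A] (s x : List A) : A → ℝ :=
  fun σ => (countOcc s (x ++ [σ]) : ℝ) / (totCount s x : ℝ)

/-- The length-`n` prefix `ω↾n` of an infinite sequence `ω`. -/
def pre {A : Type*} (ω : ℕ → A) (n : ℕ) : List A := (List.range n).map ω

/-- The probabilistic Nerode relation: `x ∼ y` iff `Pr(xz)·Pr(y) = Pr(yz)·Pr(x)`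
for every word `z`, where `Pr(x) = μ(xΣ^ω)`. -/
def Nerode {A : Type*} (μ : @Measure (ℕ → A) (CylSigma A)) (x y : List A) : Prop :=
  ∀ z : List A, μ (Cylinder (x ++ z)) * μ (Cylinder y) = μ (Cylinder (y ++ z)) * μ (Cylinder x)

/-!
Since every cylinder has positive probability, `∼` is a right congruence and the conditional
probability `Pr(xσ)/Pr(x)` depends only on the class of `x`. The Nerode classes therefore carry
a PFSA with transitions `[x] ↦ [xσ]` and probabilities `Pr(xσ)/Pr(x)`; along a word these
products telescope to `π̃([w], x) = Pr(wx)/Pr(w)`, which at `w = λ` is `Pr(x)`.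
-/

namespace PFSA

variable {Q Q' S : Type*} [Fintype S]

def comap (G : PFSA Q' S) (e : Q ≃ Q') : PFSA Q S where
  δ q σ := e.symm (G.δ (e q) σ)
  π q σ := G.π (e q) σ
  π_nonneg _ _ := G.π_nonneg _ _
  π_sum _ := G.π_sum _

theorem πs_comap (G : PFSA Q' S) (e : Q ≃ Q') (q : Q) (x : List S) :
    (G.comap e).πs q x = G.πs (e q) x := by
  induction x generalizing q with
  | nil => rfl
  | cons σ x ih =>
    rw [πs, πs, ih]
    simp [comap]

end PFSA

section WordNerode

variable {A : Type*}

def WordNerode (p : List A → ℝ) (x y : List A) : Prop :=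
  ∀ z, p (x ++ z) * p y = p (y ++ z) * p x

variable {p : List A → ℝ}

theorem wordNerode_iff_div_eq (hp : ∀ x, p x ≠ 0) {x y : List A} :
    WordNerode p x y ↔ ∀ z, p (x ++ z) / p x = p (y ++ z) / p y :=
  forall_congr' fun _ => (div_eq_div_iff (hp x) (hp y)).symm

theorem WordNerode.append_singleton (hp : ∀ x, p x ≠ 0) {x y : List A}
    (h : WordNerode p x y) (σ : A) : WordNerode p (x ++ [σ]) (y ++ [σ]) := by
  rw [wordNerode_iff_div_eq hp] at h ⊢
  intro z
  have hratio : ∀ w : List A,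
      p (w ++ [σ] ++ z) / p (w ++ [σ]) = (p (w ++ σ :: z) / p w) / (p (w ++ [σ]) / p w) := by
    intro w
    rw [List.append_assoc, List.singleton_append, div_div_div_cancel_right₀ (hp w)]
  rw [hratio, hratio, h, h]

variable [Fintype A]

noncomputable def nerodePFSA (hp : ∀ x, 0 < p x) (hsum : ∀ x, p x = ∑ σ, p (x ++ [σ])) :
    PFSA (Quot (WordNerode p)) A where
  δ t σ := Quot.map (· ++ [σ]) (fun _ _ h => h.append_singleton (fun x => (hp x).ne') σ) t
  π := Quot.lift (fun x σ => p (x ++ [σ]) / p x)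
    fun _ _ h => funext fun σ => (wordNerode_iff_div_eq (fun x => (hp x).ne')).1 h [σ]
  π_nonneg := by
    rintro ⟨x⟩ σ
    exact div_nonneg (hp _).le (hp x).le
  π_sum := by
    rintro ⟨x⟩
    change ∑ σ, p (x ++ [σ]) / p x = 1
    rw [← Finset.sum_div, ← hsum x, div_self (hp x).ne']

theorem nerodePFSA_πs (hp : ∀ x, 0 < p x) (hsum : ∀ x, p x = ∑ σ, p (x ++ [σ]))
    (w x : List A) :
    (nerodePFSA hp hsum).πs (Quot.mk _ w) x = p (w ++ x) / p w := by
  induction x generalizing w with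
  | nil => simp [PFSA.πs, div_self (hp w).ne']
  | cons σ x ih =>
    have hπ : (nerodePFSA hp hsum).π (Quot.mk _ w) σ = p (w ++ [σ]) / p w := rfl
    have hδ : (nerodePFSA hp hsum).δ (Quot.mk _ w) σ = Quot.mk _ (w ++ [σ]) := rfl
    rw [PFSA.πs, hπ, hδ, ih, List.append_assoc, List.singleton_append, mul_comm,
      div_mul_div_cancel₀ (hp _).ne']

end WordNerode

section Cylinder

variable {A : Type*}

attribute [local instance] CylSigma

theorem measurableSet_cylinder (x : List A) : MeasurableSet (Cylinder x) :=
  MeasurableSpace.measurableSet_generateFrom ⟨x, rfl⟩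

theorem cylinder_nil : Cylinder ([] : List A) = Set.univ :=
  Set.eq_univ_of_forall fun _ i => i.elim0

theorem cylinder_append_singleton (x : List A) (σ : A) :
    Cylinder (x ++ [σ]) = Cylinder x ∩ {ω | ω x.length = σ} := by
  ext ω
  simp only [Cylinder, Set.mem_inter_iff, Fin.forall_iff, List.length_append,
    List.length_singleton, Nat.lt_succ_iff_lt_or_eq, List.get_eq_getElem]
  constructor
  · intro h
    refine ⟨fun i hi => ?_, ?_⟩
    · simpa [List.getElem_append_left hi] using h i (.inl hi)
    · simpa using h x.length (.inr rfl)
  · rintro ⟨hx, hσ⟩ i (hi | rfl)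
    · simpa [List.getElem_append_left hi] using hx i hi
    · simpa using hσ

theorem measure_cylinder_eq_sum [Fintype A] (μ : Measure (ℕ → A)) (x : List A) :
    μ (Cylinder x) = ∑ σ : A, μ (Cylinder (x ++ [σ])) := by
  have hunion : Cylinder x = ⋃ σ : A, Cylinder (x ++ [σ]) := by
    ext ω
    simp [cylinder_append_singleton]
  rw [hunion, measure_iUnion _ fun _ => measurableSet_cylinder _, tsum_fintype]
  intro σ τ hne
  simp only [Function.onFun, cylinder_append_singleton]
  exact Set.disjoint_left.2 fun ω hσ hτ => hne (hσ.2.symm.trans hτ.2)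

theorem nerode_eq_wordNerode (μ : Measure (ℕ → A)) [IsFiniteMeasure μ] :
    Nerode μ = WordNerode fun x => (μ (Cylinder x)).toReal := by
  ext x y
  refine forall_congr' fun z => ?_
  rw [← ENNReal.toReal_eq_toReal_iff' (by finiteness) (by finiteness), ENNReal.toReal_mul,
    ENNReal.toReal_mul]

end Cylinder

theorem stmt_3_general {A : Type*} [Fintype A]
    (μ : @Measure (ℕ → A) (CylSigma A))
    (hμ : @IsProbabilityMeasure (ℕ → A) (CylSigma A) μ)
    (hpos : ∀ x : List A, 0 < μ (Cylinder x))
    (hfin : Finite (Quot (Nerode μ))) :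
    ∃ (Q : Type) (_ : Finite Q) (e : Q ≃ Quot (Nerode μ)) (G : PFSA Q A) (q0 : Q),
      e q0 = Quot.mk (Nerode μ) ([] : List A) ∧
      ∀ x : List A, μ (Cylinder x) = ENNReal.ofReal (G.πs q0 x) := by
  set p : List A → ℝ := fun x => (μ (Cylinder x)).toReal
  have hp : ∀ x, 0 < p x := fun x => ENNReal.toReal_pos (hpos x).ne' (measure_ne_top μ _)
  have hsum : ∀ x, p x = ∑ σ, p (x ++ [σ]) := fun x => by
    simp only [p, measure_cylinder_eq_sum μ x, ENNReal.toReal_sum fun _ _ => measure_ne_top μ _]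
  have hp_nil : p [] = 1 := by simp [p, cylinder_nil]
  rw [nerode_eq_wordNerode] at hfin ⊢
  obtain ⟨n, ⟨e⟩⟩ := Finite.exists_equiv_fin (Quot (WordNerode p))
  refine ⟨Fin n, inferInstance, e.symm, (nerodePFSA hp hsum).comap e.symm, e (Quot.mk _ []),
    e.symm_apply_apply _, fun x => ?_⟩
  rw [PFSA.πs_comap, e.symm_apply_apply, nerodePFSA_πs, List.nil_append, hp_nil, div_one,
    ENNReal.ofReal_toReal (measure_ne_top μ _)]

/-- if the probabilistic Nerode relation of a fully supported
probability measure on `(Σ^ω, B)` has finite index, then the measure is generated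
by a PFSA whose states are in bijection with the Nerode classes, with the class of
the empty word as initial state. -/
theorem stmt_3 {A : Type*} [Fintype A] (hA : 2 ≤ Fintype.card A)
    (μ : @Measure (ℕ → A) (CylSigma A))
    (hμ : @IsProbabilityMeasure (ℕ → A) (CylSigma A) μ)
    (hpos : ∀ x : List A, 0 < μ (Cylinder x))
    (hfin : Finite (Quot (Nerode μ))) :
    ∃ (Q : Type) (_ : Finite Q) (e : Q ≃ Quot (Nerode μ)) (G : PFSA Q A) (q0 : Q),
      e q0 = Quot.mk (Nerode μ) ([] : List A) ∧
      ∀ x : List A, μ (Cylinder x) = ENNReal.ofReal (G.πs q0 x) :=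
  stmt_3_general μ hμ hpos hfin
end

section
/- (ε-Synchronization of Probabilistic Automata) Let G = (Q, δ, π̃) be a strongly connected PFSA over Σ with distinguishable states, and let ℘_λ be a stationary distribution of G. Then for every ε > 0 there exist a word x ∈ Σ* with Pr(x) > 0 and a state q ∈ Q such that ‖℘_x − e_q‖∞ ≤ ε. -/
open MeasureTheory Filter

/-! The normalized vectors `℘_x` reachable from `℘` have a compact closure `K` in the simplex
that is invariant under further updates `p ↦ p_z`. Let `β` be the largest coordinate occurring in
`K`. If a point `p ∈ K` carries mass `β` on a state `q`, that mass cannot grow along any word, so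
`Pr_p(y) ≥ π̃(q, y)` for every `y`; both sides sum to `1` over the words of each length, hence are
equal. If `β < 1`, maximise the next coordinate `γ > 0` over the points of `K` having a coordinate
`β`, attained at `p` on states `q₁ ≠ q₂`. Along a word `z` either `q₁` and `q₂` merge, and then the
mass at the merged state, at most `β · π̃(q₁, z)`, leaves no room for `γ · π̃(q₂, z)`; or they stay
apart, and then maximality of `γ` bounds the mass at `δ(q₂, z)` by `γ · π̃(q₁, z)`. Either way
`π̃(q₂, ·) ≤ π̃(q₁, ·)`, which forces `q₁ = q₂` by distinguishability. So `β = 1`, i.e. some `e_q`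
lies in `K`, and some `℘_x` is `ε`-close to it. -/

open Finset

lemma exists_forall_le_of_isCompact_family {X ι : Type*} [TopologicalSpace X] [Finite ι]
    {K : ι → Set X} (hK : ∀ i, IsCompact (K i)) {f : ι → X → ℝ} (hf : ∀ i, Continuous (f i))
    (hne : ∃ i, (K i).Nonempty) :
    ∃ i, ∃ x ∈ K i, ∀ j, ∀ y ∈ K j, f j y ≤ f i x := by
  choose m hmK hmax using fun i (hi : (K i).Nonempty) =>
    (hK i).exists_isMaxOn hi (hf i).continuousOn
  have : Nonempty {i // (K i).Nonempty} := let ⟨i, hi⟩ := hne; ⟨⟨i, hi⟩⟩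
  obtain ⟨⟨i, hi⟩, hmax'⟩ := Finite.exists_max fun i : {i // (K i).Nonempty} => f i (m i i.2)
  exact ⟨i, m i hi, hmK i hi, fun j y hy => (hmax j ⟨y, hy⟩ hy).trans (hmax' ⟨j, ⟨y, hy⟩⟩)⟩

section Simplex

variable {Q : Type*} [Fintype Q] {p : Q → ℝ}

lemma exists_pos_apply_notMem_of_sum_lt_one (hp : p ∈ stdSimplex ℝ Q) {s : Finset Q}
    (hs : ∑ q ∈ s, p q < 1) : ∃ r ∉ s, 0 < p r := by
  by_contra! h
  have hsum : ∑ q ∈ s, p q = ∑ q, p q :=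
    sum_subset (subset_univ s) fun r _ hr => le_antisymm (h r hr) (hp.1 r)
  linarith [hp.2]

lemma eq_eVec_of_mem_stdSimplex [DecidableEq Q] (hp : p ∈ stdSimplex ℝ Q) {q : Q}
    (hq : p q = 1) : p = eVec q := by
  funext r
  by_cases hr : r = q
  · simp [eVec, hr, hq]
  · have hrest : ∑ r ∈ univ.erase q, p r = 0 := by
      linarith [add_sum_erase univ p (mem_univ q), hp.2]
    simpa [eVec, hr] using
      (sum_eq_zero_iff_of_nonneg fun r _ => hp.1 r).mp hrest r (mem_erase.mpr ⟨hr, mem_univ r⟩)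

lemma linf_sub_le_dist (u v : Q → ℝ) : linf (fun q => u q - v q) ≤ dist u v :=
  Real.iSup_le (fun q => by simpa [Real.dist_eq] using dist_le_pi_dist u v q) dist_nonneg

end Simplex

namespace PFSA

variable {Q S : Type*} [Fintype S] (G : PFSA Q S)

lemma πs_nonneg : ∀ (q : Q) (x : List S), 0 ≤ G.πs q x
  | _, [] => zero_le_one
  | q, σ :: x => mul_nonneg (G.π_nonneg q σ) (πs_nonneg _ x)

lemma sum_πs_ofFn : ∀ (n : ℕ) (q : Q), ∑ v : Fin n → S, G.πs q (List.ofFn v) = 1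
  | 0, q => by simp [πs]
  | n + 1, q => by
    rw [← (Fin.consEquiv fun _ => S).sum_comp, Fintype.sum_prod_type, ← G.π_sum q]
    refine sum_congr rfl fun σ _ => ?_
    simp only [Fin.consEquiv_apply, List.ofFn_succ, Fin.cons_zero, Fin.cons_succ, πs,
      ← mul_sum, sum_πs_ofFn n, mul_one]

lemma eq_of_le_of_sum_ofFn_eq {f g : List S → ℝ} (hle : ∀ y, f y ≤ g y)
    (hsum : ∀ n, ∑ v : Fin n → S, f (List.ofFn v) = ∑ v : Fin n → S, g (List.ofFn v))
    (y : List S) : f y = g y := by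
  have h := (sum_eq_sum_iff_of_le fun v (_ : v ∈ univ) => hle (List.ofFn v)).mp (hsum _)
    y.get (mem_univ _)
  rwa [List.ofFn_get] at h

variable {G} in
lemma Distinguishable.eq_of_forall_πs_le (hDist : G.Distinguishable) {q q' : Q}
    (h : ∀ z, G.πs q z ≤ G.πs q' z) : q = q' := by
  by_contra hne
  obtain ⟨y, hy⟩ := hDist q q' hne
  exact hy (eq_of_le_of_sum_ofFn_eq h (fun n => by rw [G.sum_πs_ofFn, G.sum_πs_ofFn]) y)

variable [Fintype Q] [DecidableEq Q]

lemma Γs_apply : ∀ (x : List S) (q q' : Q),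
    G.Γs x q q' = if G.δs q x = q' then G.πs q x else 0
  | [], q, q' => by by_cases h : q = q' <;> simp [Γs, δs, πs, h]
  | σ :: x, q, q' => by
    have hcons : G.Γs (σ :: x) = G.Γ σ * G.Γs x := List.prod_cons
    rw [hcons, Matrix.mul_apply]
    simp only [Γ, ite_mul, zero_mul, sum_ite_eq, mem_univ, if_true]
    rw [Γs_apply x, mul_ite, mul_zero]
    rfl

lemma wvec_apply (p : Q → ℝ) (x : List S) (q' : Q) :
    G.wvec p x q' = ∑ q, if G.δs q x = q' then p q * G.πs q x else 0 := by
  simp [wvec, Matrix.vecMul, dotProduct, Γs_apply, mul_ite]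

lemma PrW_eq_sum (p : Q → ℝ) (x : List S) : G.PrW p x = ∑ q, p q * G.πs q x := by
  simp only [PrW, wvec_apply]
  rw [sum_comm]
  simp

lemma wvec_nil (p : Q → ℝ) : G.wvec p [] = p := by
  simp [wvec, Γs]

lemma PrW_nil (p : Q → ℝ) : G.PrW p [] = ∑ q, p q := by
  simp [PrW, wvec_nil]

lemma wvec_append (p : Q → ℝ) (x z : List S) :
    G.wvec p (x ++ z) = G.wvec (G.wvec p x) z := by
  simp [wvec, Γs, List.prod_append, Matrix.vecMul_vecMul]

lemma wvec_smul (c : ℝ) (p : Q → ℝ) (x : List S) : G.wvec (c • p) x = c • G.wvec p x :=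
  Matrix.smul_vecMul c p _

lemma PrW_smul (c : ℝ) (p : Q → ℝ) (x : List S) : G.PrW (c • p) x = c * G.PrW p x := by
  simp [PrW, wvec_smul, mul_sum]

lemma wdist_apply (p : Q → ℝ) (x : List S) (q : Q) :
    G.wdist p x q = G.wvec p x q / G.PrW p x := rfl

lemma wdist_eq_smul (p : Q → ℝ) (x : List S) : G.wdist p x = (G.PrW p x)⁻¹ • G.wvec p x := by
  funext q
  simp [wdist, div_eq_inv_mul]

lemma PrW_wdist (p : Q → ℝ) (x z : List S) :
    G.PrW (G.wdist p x) z = G.PrW p (x ++ z) / G.PrW p x := by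
  rw [wdist_eq_smul, PrW_smul, div_eq_inv_mul]
  simp only [PrW, wvec_append]

lemma wdist_wdist {p : Q → ℝ} {x : List S} (hx : 0 < G.PrW p x) (z : List S) :
    G.wdist (G.wdist p x) z = G.wdist p (x ++ z) := by
  rw [wdist_eq_smul, PrW_wdist, wdist_eq_smul G p x, wvec_smul, ← wvec_append, smul_smul,
    wdist_eq_smul]
  congr 1
  field_simp

lemma sum_PrW_ofFn {p : Q → ℝ} (hp1 : ∑ q, p q = 1) (n : ℕ) :
    ∑ v : Fin n → S, G.PrW p (List.ofFn v) = 1 := by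
  simp only [PrW_eq_sum]
  rw [sum_comm]
  simp [← mul_sum, G.sum_πs_ofFn, hp1]

lemma continuous_wvec (x : List S) : Continuous fun p : Q → ℝ => G.wvec p x :=
  continuous_id.matrix_vecMul continuous_const

lemma continuous_PrW (x : List S) : Continuous fun p : Q → ℝ => G.PrW p x :=
  continuous_finsetSum _ fun q _ => (continuous_apply q).comp (G.continuous_wvec x)

lemma continuousOn_wdist (x : List S) :
    ContinuousOn (fun p => G.wdist p x) {p | 0 < G.PrW p x} :=
  continuousOn_pi.mpr fun q => ((continuous_apply q).comp (G.continuous_wvec x)).continuousOn.div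
    (G.continuous_PrW x).continuousOn fun _ hp => hp.ne'

def IsInvariant (K : Set (Q → ℝ)) : Prop :=
  ∀ p ∈ K, ∀ x, 0 < G.PrW p x → G.wdist p x ∈ K

def reachable (p : Q → ℝ) : Set (Q → ℝ) :=
  {r | ∃ x, 0 < G.PrW p x ∧ G.wdist p x = r}

lemma isInvariant_reachable (p : Q → ℝ) : G.IsInvariant (G.reachable p) := by
  rintro _ ⟨x, hx, rfl⟩ z hz
  refine ⟨x ++ z, ?_, (G.wdist_wdist hx z).symm⟩
  rw [PrW_wdist] at hz
  exact (div_pos_iff_of_pos_right hx).mp hz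

variable {G}

lemma IsInvariant.closure {K : Set (Q → ℝ)} (hK : G.IsInvariant K) :
    G.IsInvariant (closure K) := by
  intro p hp x hx
  have hpK : p ∈ _root_.closure ({p | 0 < G.PrW p x} ∩ K) :=
    (isOpen_lt continuous_const (G.continuous_PrW x)).inter_closure ⟨hx, hp⟩
  refine closure_mono ?_ ((G.continuousOn_wdist x p hx).mono Set.inter_subset_left
    |>.mem_closure_image hpK)
  rintro _ ⟨r, ⟨hr, hrK⟩, rfl⟩
  exact hK r hrK x hr

lemma mem_reachable_self {p : Q → ℝ} (hp : ∑ q, p q = 1) : p ∈ G.reachable p :=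
  ⟨[], by simp [PrW_nil, hp], by funext q; simp [wdist, wvec_nil, PrW_nil, hp]⟩

section Nonneg

variable {p : Q → ℝ} (hp : ∀ q, 0 ≤ p q)
include hp

lemma wvec_nonneg (x : List S) (q' : Q) : 0 ≤ G.wvec p x q' := by
  rw [wvec_apply]
  exact sum_nonneg fun q _ => ite_nonneg (mul_nonneg (hp q) (G.πs_nonneg q x)) le_rfl

lemma wvec_le_PrW (x : List S) (q' : Q) : G.wvec p x q' ≤ G.PrW p x :=
  single_le_sum (fun q _ => wvec_nonneg hp x q) (mem_univ q')

lemma mul_πs_le_PrW (x : List S) (q : Q) : p q * G.πs q x ≤ G.PrW p x := by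
  rw [PrW_eq_sum]
  exact single_le_sum (fun r _ => mul_nonneg (hp r) (G.πs_nonneg r x)) (mem_univ q)

lemma mul_πs_le_wvec (x : List S) (q : Q) : p q * G.πs q x ≤ G.wvec p x (G.δs q x) := by
  rw [wvec_apply]
  have h := single_le_sum (f := fun r => if G.δs r x = G.δs q x then p r * G.πs r x else 0)
    (fun r _ => ite_nonneg (mul_nonneg (hp r) (G.πs_nonneg r x)) le_rfl) (mem_univ q)
  simpa using h

lemma add_mul_πs_le_wvec {x : List S} {q₁ q₂ : Q} (hne : q₁ ≠ q₂)
    (hmerge : G.δs q₂ x = G.δs q₁ x) :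
    p q₁ * G.πs q₁ x + p q₂ * G.πs q₂ x ≤ G.wvec p x (G.δs q₁ x) := by
  rw [wvec_apply]
  have h := sum_le_sum_of_subset_of_nonneg
    (f := fun q => if G.δs q x = G.δs q₁ x then p q * G.πs q x else 0) (subset_univ {q₁, q₂})
    fun q _ _ => ite_nonneg (mul_nonneg (hp q) (G.πs_nonneg q x)) le_rfl
  simpa [sum_pair hne, hmerge] using h

lemma wdist_mem_stdSimplex {x : List S} (hx : 0 < G.PrW p x) :
    G.wdist p x ∈ stdSimplex ℝ Q := by
  refine ⟨fun q => div_nonneg (wvec_nonneg hp x q) hx.le, ?_⟩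
  simp only [wdist_apply, ← sum_div]
  exact div_self hx.ne'

lemma reachable_subset_stdSimplex : G.reachable p ⊆ stdSimplex ℝ Q := by
  rintro _ ⟨x, hx, rfl⟩
  exact wdist_mem_stdSimplex hp hx

end Nonneg

section InvariantSet

variable {K : Set (Q → ℝ)} (hKΔ : K ⊆ stdSimplex ℝ Q) (hK : G.IsInvariant K) {β : ℝ}
  (hβ : ∀ p ∈ K, ∀ q, p q ≤ β)
include hKΔ hK hβ

lemma wvec_le_mul_PrW {p : Q → ℝ} (hp : p ∈ K) (x : List S) (r : Q) :
    G.wvec p x r ≤ β * G.PrW p x := by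
  have hp0 := (hKΔ hp).1
  rcases lt_or_ge 0 (G.PrW p x) with hpos | hle
  · exact (div_le_iff₀ hpos).mp (hβ _ (hK p hp x hpos) r)
  · have h0 : G.PrW p x = 0 := le_antisymm hle ((wvec_nonneg hp0 x r).trans (wvec_le_PrW hp0 x r))
    rw [h0, mul_zero]
    exact h0 ▸ wvec_le_PrW hp0 x r

lemma PrW_eq_πs_of_apply_eq (hβpos : 0 < β) {p : Q → ℝ} (hp : p ∈ K) {q : Q} (hq : p q = β)
    (y : List S) : G.PrW p y = G.πs q y := by
  have hle : ∀ y, G.πs q y ≤ G.PrW p y := fun y => le_of_mul_le_mul_left (calc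
    β * G.πs q y ≤ G.wvec p y (G.δs q y) := hq ▸ mul_πs_le_wvec (hKΔ hp).1 y q
    _ ≤ β * G.PrW p y := wvec_le_mul_PrW hKΔ hK hβ hp y _) hβpos
  exact (eq_of_le_of_sum_ofFn_eq hle
    (fun n => by rw [G.sum_πs_ofFn, G.sum_PrW_ofFn (hKΔ hp).2]) y).symm

lemma πs_le_πs_of_secondMax {γ : ℝ} (hγ : ∀ p ∈ K, ∀ r r', r ≠ r' → p r = β → p r' ≤ γ)
    (hγpos : 0 < γ) {p : Q → ℝ} (hp : p ∈ K) {q₁ q₂ : Q} (hne : q₁ ≠ q₂) (h₁ : p q₁ = β)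
    (h₂ : p q₂ = γ) (z : List S) : G.πs q₂ z ≤ G.πs q₁ z := by
  have hp0 := (hKΔ hp).1
  have hPrW : G.PrW p z = G.πs q₁ z :=
    PrW_eq_πs_of_apply_eq hKΔ hK hβ (hγpos.trans_le (h₂ ▸ hβ p hp q₂)) hp h₁ z
  refine le_of_mul_le_mul_left ?_ hγpos
  rcases (G.πs_nonneg q₁ z).eq_or_lt with h0 | hpos
  · calc γ * G.πs q₂ z ≤ G.PrW p z := h₂ ▸ mul_πs_le_PrW hp0 z q₂
      _ = γ * G.πs q₁ z := by rw [hPrW, ← h0, mul_zero]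
  by_cases hmerge : G.δs q₂ z = G.δs q₁ z
  · have hsum := (add_mul_πs_le_wvec hp0 hne hmerge).trans (wvec_le_mul_PrW hKΔ hK hβ hp z _)
    rw [h₁, h₂, hPrW] at hsum
    nlinarith [G.πs_nonneg q₁ z]
  · have hp'K : G.wdist p z ∈ K := hK p hp z (hPrW ▸ hpos)
    have hβ' : G.wdist p z (G.δs q₁ z) = β := by
      refine le_antisymm (hβ _ hp'K _) ?_
      rw [wdist_apply, le_div_iff₀ (hPrW ▸ hpos), hPrW]
      exact h₁ ▸ mul_πs_le_wvec hp0 z q₁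
    have hγ' := hγ _ hp'K _ _ (Ne.symm hmerge) hβ'
    rw [wdist_apply, div_le_iff₀ (hPrW ▸ hpos), hPrW] at hγ'
    calc γ * G.πs q₂ z = p q₂ * G.πs q₂ z := by rw [h₂]
      _ ≤ G.wvec p z (G.δs q₂ z) := mul_πs_le_wvec hp0 z q₂
      _ ≤ γ * G.πs q₁ z := hγ'

lemma max_apply_eq_one (hDist : G.Distinguishable) (hKc : IsCompact K) {p₀ : Q → ℝ}
    (hp₀ : p₀ ∈ K) {q₀ : Q} (h₀ : p₀ q₀ = β) : β = 1 := by
  refine le_antisymm (h₀ ▸ (mem_Icc_of_mem_stdSimplex (hKΔ hp₀) q₀).2) (not_lt.mp fun hlt => ?_)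
  obtain ⟨r, hr, -⟩ :=
    exists_pos_apply_notMem_of_sum_lt_one (hKΔ hp₀) (s := {q₀}) (by simpa [h₀] using hlt)
  obtain ⟨⟨⟨q₁, q₂⟩, hne⟩, p₁, ⟨hp₁, h₁⟩, hmax⟩ :=
    exists_forall_le_of_isCompact_family (ι := {qq : Q × Q // qq.1 ≠ qq.2})
      (K := fun i => K ∩ {p | p i.1.1 = β})
      (fun _ => hKc.inter_right (isClosed_eq (continuous_apply _) continuous_const))
      (f := fun i p => p i.1.2) (fun _ => continuous_apply _)
      ⟨⟨(q₀, r), Ne.symm (by simpa using hr)⟩, p₀, hp₀, h₀⟩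
  have h₁ : p₁ q₁ = β := h₁
  have hγ : ∀ p ∈ K, ∀ r r', r ≠ r' → p r = β → p r' ≤ p₁ q₂ :=
    fun p hp r r' hrr' hr => hmax ⟨(r, r'), hrr'⟩ p ⟨hp, hr⟩
  obtain ⟨r', hr', hpos⟩ :=
    exists_pos_apply_notMem_of_sum_lt_one (hKΔ hp₁) (s := {q₁}) (by simpa [h₁] using hlt)
  have hγpos : 0 < p₁ q₂ := hpos.trans_le (hγ p₁ hp₁ q₁ r' (Ne.symm (by simpa using hr')) h₁)
  exact hne (hDist.eq_of_forall_πs_le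
    (πs_le_πs_of_secondMax hKΔ hK hβ hγ hγpos hp₁ hne h₁ rfl)).symm

end InvariantSet

lemma exists_eVec_mem_of_isInvariant (hDist : G.Distinguishable) {K : Set (Q → ℝ)}
    (hKc : IsCompact K) (hKne : K.Nonempty) (hKΔ : K ⊆ stdSimplex ℝ Q) (hK : G.IsInvariant K) :
    ∃ q, eVec q ∈ K := by
  obtain ⟨p, hp⟩ := hKne
  obtain ⟨q, -, -⟩ := exists_pos_apply_notMem_of_sum_lt_one (hKΔ hp) (s := ∅) (by simp)
  obtain ⟨q₀, p₀, hp₀, hmax⟩ := exists_forall_le_of_isCompact_family (fun _ : Q => hKc)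
    (f := fun q p => p q) continuous_apply ⟨q, p, hp⟩
  have h₀ := max_apply_eq_one hKΔ hK (fun p hp q => hmax q p hp) hDist hKc hp₀ rfl
  exact ⟨q₀, eq_eVec_of_mem_stdSimplex (hKΔ hp₀) h₀ ▸ hp₀⟩

end PFSA

theorem stmt_5_general {Q S : Type*} [Fintype S] [Fintype Q] [DecidableEq Q]
    (G : PFSA Q S)
    (hDist : G.Distinguishable)
    (℘ : Q → ℝ) (h℘ : G.IsStationary ℘) :
    ∀ ε > (0 : ℝ), ∃ (x : List S) (q : Q),
      0 < G.PrW ℘ x ∧ linf (fun q' => G.wdist ℘ x q' - eVec q q') ≤ ε := by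
  intro ε hε
  obtain ⟨h℘0, h℘1, -⟩ := h℘
  have hKΔ : closure (G.reachable ℘) ⊆ stdSimplex ℝ Q :=
    closure_minimal (PFSA.reachable_subset_stdSimplex h℘0) (isClosed_stdSimplex ℝ Q)
  obtain ⟨q, hq⟩ := G.exists_eVec_mem_of_isInvariant hDist
    ((isCompact_stdSimplex ℝ Q).of_isClosed_subset isClosed_closure hKΔ)
    ⟨℘, subset_closure (PFSA.mem_reachable_self h℘1)⟩ hKΔ (G.isInvariant_reachable ℘).closure
  obtain ⟨_, ⟨x, hx, rfl⟩, hdist⟩ := Metric.mem_closure_iff.mp hq ε hε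
  exact ⟨x, q, hx, (linf_sub_le_dist _ _).trans (dist_comm (eVec q) _ ▸ hdist.le)⟩

/-- ε-Synchronization of Probabilistic Automata: for a strongly
connected PFSA with distinguishable states and stationary distribution `℘_λ`, every
`ε > 0` admits a word `x` with `Pr(x) > 0` and a state `q` with `‖℘_x − e_q‖∞ ≤ ε`. -/
theorem stmt_5 {Q S : Type*} [Fintype S] [Fintype Q] [DecidableEq Q]
    (hS : 2 ≤ Fintype.card S) (G : PFSA Q S)
    (hSC : G.StronglyConnected) (hDist : G.Distinguishable)
    (℘ : Q → ℝ) (h℘ : G.IsStationary ℘) :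
    ∀ ε > (0 : ℝ), ∃ (x : List S) (q : Q),
      0 < G.PrW ℘ x ∧ linf (fun q' => G.wdist ℘ x q' - eVec q q') ≤ ε :=
  stmt_5_general G hDist ℘ h℘
end
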